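/- Let q ∈ ℝ and for ϑ = (ϑ₁, ϑ₂) ∈ ℝ² define the Hermitian 2×2 matrix H(ϑ) with entries H(ϑ)₁₁ = 3 + q, H(ϑ)₂₂ = 3 − q, H(ϑ)₁₂ = −(1 + e^{iϑ₁} + e^{iϑ₂}), H(ϑ)₂₁ = −(1 + e^{−iϑ₁} + e^{−iϑ₂}). For s = (s₁, s₂) ∈ ℝ² put ϑ(s) = (2π/3 + s₁, −2π/3 + s₂), t₁ = (√3/2)(s₁ − s₂), t₂ = −(s₁ + s₂)/2, and let D_q(t) = t₁σ₁ + t₂σ₂ + qσ₃ where σ₁ = [[0,1],[1,0]], σ₂ = [[0,−i],[i,0]], σ₃ = [[1,0],[0,−1]] are the Pauli matrices. Then there exists a constant C > 0 such that for every s ∈ ℝ² with ‖s‖ ≤ 1, every entry of the matrix H(ϑ(s)) − 3·I − D_q(t) has absolute value at most C‖s‖². -/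

import Mathlib

open Matrix Complex

/-- The Floquet fiber matrix of the Schrödinger operator on the hexagonal lattice
(graphene) with potential values `q`, `−q`. -/
noncomputable def hexFiber (q : ℝ) (ϑ : ℝ × ℝ) : Matrix (Fin 2) (Fin 2) ℂ :=
  !![(3 + q : ℝ), -(1 + Complex.exp (Complex.I * ϑ.1) + Complex.exp (Complex.I * ϑ.2));
     -(1 + Complex.exp (-Complex.I * ϑ.1) + Complex.exp (-Complex.I * ϑ.2)), (3 - q : ℝ)]

/-- The Pauli matrices. -/
noncomputable def pauli1 : Matrix (Fin 2) (Fin 2) ℂ := !![0, 1; 1, 0]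
noncomputable def pauli2 : Matrix (Fin 2) (Fin 2) ℂ := !![0, -Complex.I; Complex.I, 0]
noncomputable def pauli3 : Matrix (Fin 2) (Fin 2) ℂ := !![1, 0; 0, -1]

/-- The symbol `D_q(t) = t₁σ₁ + t₂σ₂ + qσ₃` of the 2D massive Dirac operator. -/
noncomputable def diracSymbol (q t₁ t₂ : ℝ) : Matrix (Fin 2) (Fin 2) ℂ :=
  t₁ • pauli1 + t₂ • pauli2 + q • pauli3


private lemma fbound (x : ℝ) (hx : |x| ≤ 1) :
    Norm.norm (Complex.exp (Complex.I * x) - 1 - Complex.I * x) ≤ x ^ 2 := by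
  have h : Norm.norm (Complex.I * x) ≤ 1 := by
    rw [norm_mul, Complex.norm_I, one_mul, Complex.norm_real, Real.norm_eq_abs]; exact hx
  have := Complex.norm_exp_sub_one_sub_id_le h
  rw [norm_mul, Complex.norm_I, one_mul, Complex.norm_real, Real.norm_eq_abs, _root_.sq_abs] at this
  exact this

private lemma exp_I_add (θ x : ℝ) :
    Complex.exp (Complex.I * ((θ + x : ℝ) : ℂ)) =
      ((Real.cos θ : ℂ) + (Real.sin θ : ℂ) * Complex.I) * Complex.exp (Complex.I * x) := by
  push_cast
  rw [mul_add, Complex.exp_add, mul_comm Complex.I (θ:ℂ), Complex.exp_mul_I,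
    ← Complex.ofReal_cos, ← Complex.ofReal_sin]

private lemma exp_neg_I_add (θ x : ℝ) :
    Complex.exp (-Complex.I * ((θ + x : ℝ) : ℂ)) =
      ((Real.cos θ : ℂ) - (Real.sin θ : ℂ) * Complex.I) * Complex.exp (Complex.I * ((-x : ℝ) : ℂ)) := by
  have h : (-Complex.I * ((θ + x : ℝ) : ℂ)) = Complex.I * ((-θ + -x : ℝ) : ℂ) := by push_cast; ring
  rw [h, exp_I_add (-θ) (-x), Real.cos_neg, Real.sin_neg]
  push_cast
  ring

/-- near the Dirac point `ϑ⁰ = (2π/3, −2π/3)` the graphene fiber matrix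
equals `3·I + D_q(t(s))` up to an error quadratic in `s`:
there is `C > 0` with every entry of `H(ϑ⁰ + s) − 3·I − D_q(t(s))` of absolute value
at most `C‖s‖²` for `‖s‖ ≤ 1`. -/
theorem graphene_dirac_point (q : ℝ) :
    ∃ C > (0 : ℝ), ∀ s : ℝ × ℝ, ‖s‖ ≤ 1 →
      ∀ i j : Fin 2,
        Norm.norm
          ((hexFiber q (2 * Real.pi / 3 + s.1, -(2 * Real.pi / 3) + s.2) -
              (3 : ℂ) • (1 : Matrix (Fin 2) (Fin 2) ℂ) -
              diracSymbol q (Real.sqrt 3 / 2 * (s.1 - s.2)) (-(s.1 + s.2) / 2)) i j) ≤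
          C * ‖s‖ ^ 2 := by
  
  refine ⟨4, by norm_num, ?_⟩
  intro s hs i j
  obtain ⟨a, b⟩ := s
  have ha : |a| ≤ ‖(a, b)‖ := by simpa using norm_fst_le (a, b)
  have hb : |b| ≤ ‖(a, b)‖ := by simpa using norm_snd_le (a, b)
  have hn : (0:ℝ) ≤ ‖(a, b)‖ := norm_nonneg _
  have hfa := fbound a (ha.trans hs)
  have hfb := fbound b (hb.trans hs)
  have ha2 : a ^ 2 ≤ ‖(a, b)‖ ^ 2 := by
    rw [← _root_.sq_abs]; exact pow_le_pow_left₀ (abs_nonneg a) ha 2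
  have hb2 : b ^ 2 ≤ ‖(a, b)‖ ^ 2 := by
    rw [← _root_.sq_abs]; exact pow_le_pow_left₀ (abs_nonneg b) hb 2
  have hc : Real.cos (2 * Real.pi / 3) = -(1/2) := by
    rw [show 2*Real.pi/3 = Real.pi - Real.pi/3 by ring, Real.cos_pi_sub, Real.cos_pi_div_three]
  have hsin : Real.sin (2 * Real.pi / 3) = Real.sqrt 3 / 2 := by
    rw [show 2*Real.pi/3 = Real.pi - Real.pi/3 by ring, Real.sin_pi_sub, Real.sin_pi_div_three]
  fin_cases i <;> fin_cases j <;>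
    simp only [hexFiber, diracSymbol, pauli1, pauli2, pauli3, Fin.mk_zero, Fin.mk_one,
      Fin.isValue, Matrix.of_apply, Matrix.sub_apply,
      Matrix.smul_apply, Matrix.one_apply, Matrix.add_apply, Matrix.cons_val', Matrix.cons_val_zero,
      Matrix.cons_val_one, Matrix.head_cons, Matrix.head_fin_const, Matrix.empty_val',
      Matrix.cons_val_fin_one, smul_eq_mul]
  · -- (0,0)
    have h0 : (((3 + q : ℝ):ℂ) - 3 * if True then (1:ℂ) else 0) -
        ((Real.sqrt 3 / 2 * (a - b)) • (0:ℂ) + (-(a + b) / 2) • (0:ℂ) + q • (1:ℂ)) = 0 := by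
      simp only [Complex.real_smul, if_true, smul_zero]
      push_cast
      ring
    rw [h0, norm_zero]
    positivity
  · -- (0,1)
    rw [exp_I_add (2*Real.pi/3) a, exp_I_add (-(2*Real.pi/3)) b,
      Real.cos_neg, Real.sin_neg, hc, hsin]
    norm_num [Complex.real_smul]
    have key : -((-(1 / 2) + -((Real.sqrt 3:ℂ) / 2 * Complex.I)) * Complex.exp (Complex.I * b)) +
          (-((-(1 / 2) + (Real.sqrt 3:ℂ) / 2 * Complex.I) * Complex.exp (Complex.I * a)) + -1) -
        ((Real.sqrt 3:ℂ) / 2 * (a - b) + -((-(b:ℂ) + -(a:ℂ)) / 2 * Complex.I)) =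
        -((-(1 / 2) + (Real.sqrt 3:ℂ) / 2 * Complex.I) * (Complex.exp (Complex.I * a) - 1 - Complex.I * a) +
          (-(1 / 2) - (Real.sqrt 3:ℂ) / 2 * Complex.I) * (Complex.exp (Complex.I * b) - 1 - Complex.I * b)) := by
      linear_combination (-(Real.sqrt 3:ℂ) / 2 * ((a:ℂ) - b)) * Complex.I_mul_I
    rw [key, norm_neg]
    have h3 : Real.sqrt 3 ≤ 2 := by
      nlinarith [Real.sq_sqrt (by norm_num : (0:ℝ) ≤ 3), Real.sqrt_nonneg 3]
    have hω1 : Norm.norm (-(1/2) + (Real.sqrt 3:ℂ)/2 * Complex.I) ≤ 2 := by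
      refine le_trans (Complex.norm_le_abs_re_add_abs_im _) ?_
      simp
      rw [_root_.abs_of_nonneg (by positivity : (0:ℝ) ≤ Real.sqrt 3 / 2)]
      linarith
    have hω2 : Norm.norm (-(1/2) - (Real.sqrt 3:ℂ)/2 * Complex.I) ≤ 2 := by
      refine le_trans (Complex.norm_le_abs_re_add_abs_im _) ?_
      simp
      rw [_root_.abs_of_nonneg (by positivity : (0:ℝ) ≤ Real.sqrt 3 / 2)]
      linarith
    refine le_trans (norm_add_le _ _) ?_
    rw [norm_mul, norm_mul]
    have := mul_le_mul hω1 hfa (norm_nonneg _) (by norm_num)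
    have := mul_le_mul hω2 hfb (norm_nonneg _) (by norm_num)
    have hm : ‖(a, b)‖ = max |a| |b| := by simp
    rw [hm] at ha2 hb2
    linarith
  · -- (1,0)
    rw [exp_neg_I_add (2*Real.pi/3) a, exp_neg_I_add (-(2*Real.pi/3)) b,
      Real.cos_neg, Real.sin_neg, hc, hsin]
    have hfa' : Norm.norm (Complex.exp (Complex.I * ((-a:ℝ):ℂ)) - 1 - Complex.I * ((-a:ℝ):ℂ)) ≤ a ^ 2 := by
      simpa using fbound (-a) (by rw [abs_neg]; first | exact ha.trans hs | exact hb.trans hs)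
    have hfb' : Norm.norm (Complex.exp (Complex.I * ((-b:ℝ):ℂ)) - 1 - Complex.I * ((-b:ℝ):ℂ)) ≤ b ^ 2 := by
      simpa using fbound (-b) (by rw [abs_neg]; first | exact ha.trans hs | exact hb.trans hs)
    rw [show Complex.I * ((-a:ℝ):ℂ) = -(Complex.I * (a:ℂ)) by push_cast; ring] at hfa'
    rw [show Complex.I * ((-b:ℝ):ℂ) = -(Complex.I * (b:ℂ)) by push_cast; ring] at hfb'
    norm_num [Complex.real_smul]
    have key : -((-(1 / 2) + (Real.sqrt 3:ℂ) / 2 * Complex.I) * Complex.exp (-(Complex.I * b))) +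
          (-((-(1 / 2) - (Real.sqrt 3:ℂ) / 2 * Complex.I) * Complex.exp (-(Complex.I * a))) + -1) -
        ((Real.sqrt 3:ℂ) / 2 * ((a:ℂ) - b) + (-(b:ℂ) + -(a:ℂ)) / 2 * Complex.I) =
        -((-(1 / 2) - (Real.sqrt 3:ℂ) / 2 * Complex.I) * (Complex.exp (-(Complex.I * a)) - 1 - -(Complex.I * a)) +
          (-(1 / 2) + (Real.sqrt 3:ℂ) / 2 * Complex.I) * (Complex.exp (-(Complex.I * b)) - 1 - -(Complex.I * b))) := by
      linear_combination (-(Real.sqrt 3:ℂ) / 2 * ((a:ℂ) - b)) * Complex.I_mul_I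
    rw [key, norm_neg]
    have h3 : Real.sqrt 3 ≤ 2 := by
      nlinarith [Real.sq_sqrt (by norm_num : (0:ℝ) ≤ 3), Real.sqrt_nonneg 3]
    have hω1 : Norm.norm (-(1/2) + (Real.sqrt 3:ℂ)/2 * Complex.I) ≤ 2 := by
      refine le_trans (Complex.norm_le_abs_re_add_abs_im _) ?_
      simp
      rw [_root_.abs_of_nonneg (by positivity : (0:ℝ) ≤ Real.sqrt 3 / 2)]
      linarith
    have hω2 : Norm.norm (-(1/2) - (Real.sqrt 3:ℂ)/2 * Complex.I) ≤ 2 := by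
      refine le_trans (Complex.norm_le_abs_re_add_abs_im _) ?_
      simp
      rw [_root_.abs_of_nonneg (by positivity : (0:ℝ) ≤ Real.sqrt 3 / 2)]
      linarith
    refine le_trans (norm_add_le _ _) ?_
    rw [norm_mul, norm_mul]
    have := mul_le_mul hω2 hfa' (norm_nonneg _) (by norm_num)
    have := mul_le_mul hω1 hfb' (norm_nonneg _) (by norm_num)
    have hm : ‖(a, b)‖ = max |a| |b| := by simp
    rw [hm] at ha2 hb2
    linarith
  · -- (1,1)
    have h0 : (((3 - q : ℝ):ℂ) - 3 * if True then (1:ℂ) else 0) -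
        ((Real.sqrt 3 / 2 * (a - b)) • (0:ℂ) + (-(a + b) / 2) • (0:ℂ) + q • (-1:ℂ)) = 0 := by
      simp only [Complex.real_smul, if_true, smul_zero]
      push_cast
      ring
    rw [h0, norm_zero]
    positivity
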